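/- arXiv:1504.00597 — 2 statements merged into one kernel-verified Lean document; each statement's English description precedes it below -/
import Mathlib

section
/- For every integer d ≥ 1 there exists a constant C > 0 such that for every real R > 1 there exists a finite set U of unit vectors in ℝ^d with cardinality at most C·R^((d-1)/2) and such that {x ∈ ℝ^d : ‖x‖ ≥ R} ⊆ ⋃_{v ∈ U} {x ∈ ℝ^d : ⟨x, v⟩ ≥ R − 1}. -/
/-!
A maximal `2t`-separated subset `U` of the unit sphere is a `2t`-net of it, and the balls of
radius `t` around its points are disjoint and fill part of the shell `1 - t ≤ ‖y‖ ≤ 1 + t`.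
Comparing volumes gives `#U * t ^ d ≤ (1 + t) ^ d - (1 - t) ^ d ≤ d 2 ^ d t`, i.e.
`#U = O(t ^ (1 - d))`. If `‖x / ‖x‖ - v‖ ≤ 2t` with `t = (2R) ^ (-1/2)`, then
`⟪x / ‖x‖, v⟫ ≥ 1 - 1 / R`, so `⟪x, v⟫ ≥ R - 1` as soon as `‖x‖ ≥ R`.
-/

open EuclideanSpace

open Metric MeasureTheory Module Set Real
open scoped NNReal RealInnerProductSpace

theorem one_add_pow_sub_one_sub_pow_le {t : ℝ} (ht₀ : 0 ≤ t) (ht₁ : t ≤ 1) (n : ℕ) :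
    (1 + t) ^ n - (1 - t) ^ n ≤ n * 2 ^ n * t := by
  induction n with
  | zero => simp
  | succ n ih =>
    have h₁ : (1 - t) ^ n ≤ 1 := pow_le_one₀ (by linarith) (by linarith)
    have h₂ : t ≤ 2 ^ n * t := le_mul_of_one_le_left ht₀ (one_le_pow₀ (by norm_num))
    have h₃ : 0 ≤ (1 + t) ^ n - (1 - t) ^ n :=
      sub_nonneg.mpr (pow_le_pow_left₀ (by linarith) (by linarith) n)
    calc (1 + t) ^ (n + 1) - (1 - t) ^ (n + 1)
        = (1 + t) * ((1 + t) ^ n - (1 - t) ^ n) + 2 * t * (1 - t) ^ n := by ring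
      _ ≤ 2 * (n * 2 ^ n * t) + 2 * t * 1 := by gcongr; linarith
      _ ≤ (n + 1 : ℕ) * 2 ^ (n + 1) * t := by push_cast; rw [pow_succ]; linarith

theorem le_mul_rpow_of_mul_pow_le {N R : ℝ} (hR : 0 < R) (d : ℕ)
    (h : N * ((2 * R) ^ (-(1 / 2) : ℝ)) ^ d ≤ d * 2 ^ d * (2 * R) ^ (-(1 / 2) : ℝ)) :
    N ≤ (d + 1) * 4 ^ d * R ^ (((d : ℝ) - 1) / 2) := by
  set t := (2 * R) ^ (-(1 / 2) : ℝ)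
  have ht₀ : 0 < t := by positivity
  have hN : N ≤ d * 2 ^ d * t ^ ((1 : ℝ) - d) := by
    rw [rpow_sub ht₀, rpow_one, rpow_natCast, ← mul_div_assoc, le_div_iff₀ (by positivity)]
    exact h
  have ht : t ^ ((1 : ℝ) - d) = 2 ^ (((d : ℝ) - 1) / 2) * R ^ (((d : ℝ) - 1) / 2) := by
    rw [← rpow_mul (by positivity), ← mul_rpow (by norm_num) hR.le]
    ring_nf
  have h₂ : (2 : ℝ) ^ (((d : ℝ) - 1) / 2) ≤ 2 ^ d := by
    rw [← rpow_natCast]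
    exact rpow_le_rpow_of_exponent_le (by norm_num) (by linarith)
  calc N ≤ d * 2 ^ d * (2 ^ (((d : ℝ) - 1) / 2) * R ^ (((d : ℝ) - 1) / 2)) := ht ▸ hN
    _ ≤ (d + 1) * 2 ^ d * (2 ^ d * R ^ (((d : ℝ) - 1) / 2)) := by gcongr; linarith
    _ = (d + 1) * 4 ^ d * R ^ (((d : ℝ) - 1) / 2) := by
      rw [show (4 : ℝ) = 2 * 2 by norm_num, mul_pow]
      ring

theorem IsCompact.packingNumber_ne_top {X : Type*} [PseudoEMetricSpace X] {A : Set X}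
    (hA : IsCompact A) {ε : ℝ≥0} (hε : ε ≠ 0) : packingNumber ε A ≠ ⊤ := by
  obtain ⟨N, -, hN, hcover⟩ :=
    exists_finite_isCover_of_isCompact (half_pos (pos_iff_ne_zero.mpr hε)).ne' hA
  refine (lt_of_le_of_lt ?_ (hcover.externalCoveringNumber_le_encard.trans_lt hN.encard_lt_top)).ne
  simpa [mul_div_cancel₀ ε two_ne_zero] using
    packingNumber_two_mul_le_externalCoveringNumber (ε / 2) A

section FiniteDimensional

variable {E : Type*} [NormedAddCommGroup E] [NormedSpace ℝ E] [FiniteDimensional ℝ E]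

theorem MeasureTheory.Measure.addHaar_real_ball_of_pos [MeasurableSpace E] [BorelSpace E]
    (μ : Measure E) [μ.IsAddHaarMeasure] (x : E) {r : ℝ} (hr : 0 < r) :
    μ.real (ball x r) = r ^ finrank ℝ E * μ.real (ball 0 1) := by
  rw [measureReal_def, Measure.addHaar_ball_of_pos μ x hr, ENNReal.toReal_mul,
    ENNReal.toReal_ofReal (by positivity), measureReal_def]

theorem card_mul_pow_le_of_pairwise_le_dist {s : Finset E} (hs : ↑s ⊆ sphere (0 : E) 1) {t : ℝ}
    (ht₀ : 0 < t) (ht₁ : t ≤ 1) (hsep : (s : Set E).Pairwise fun u v ↦ 2 * t ≤ dist u v) :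
    s.card * t ^ finrank ℝ E ≤ (1 + t) ^ finrank ℝ E - (1 - t) ^ finrank ℝ E := by
  borelize E
  obtain ⟨μ, _⟩ : ∃ μ : Measure E, μ.IsAddHaarMeasure := ⟨Measure.addHaar, inferInstance⟩
  have hdisj : (s : Set E).PairwiseDisjoint (ball · t) := fun u hu v hv huv ↦
    ball_disjoint_ball (by linarith [hsep hu hv huv])
  have hshell : ∀ v ∈ s, ∀ y ∈ ball v t, 1 - t < ‖y‖ ∧ ‖y‖ < 1 + t := fun v hv y hy ↦ by
    have hv : ‖v‖ = 1 := by simpa using hs hv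
    have hy : ‖y - v‖ < t := mem_ball_iff_norm.mp hy
    constructor <;> linarith [norm_sub_norm_le y v, norm_sub_norm_le v y, norm_sub_rev y v]
  have hsub : (⋃ v ∈ s, ball v t) ⊆ closedBall 0 (1 + t) := by
    simp only [iUnion_subset_iff]
    exact fun v hv y hy ↦ mem_closedBall_zero_iff.mpr (hshell v hv y hy).2.le
  have hdisj' : Disjoint (⋃ v ∈ s, ball v t) (closedBall 0 (1 - t)) := by
    simp only [disjoint_iUnion_left]
    exact fun v hv ↦ disjoint_left.mpr fun y hy hy' ↦
      (hshell v hv y hy).1.not_ge (mem_closedBall_zero_iff.mp hy')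
  have hmeas : ∑ v ∈ s, μ.real (ball v t) + μ.real (closedBall 0 (1 - t)) ≤
      μ.real (closedBall 0 (1 + t)) := by
    rw [← measureReal_biUnion_finset hdisj (fun _ _ ↦ measurableSet_ball)
        (fun _ _ ↦ measure_ball_lt_top.ne), ← measureReal_union hdisj' measurableSet_closedBall
        ((measure_mono hsub).trans_lt measure_closedBall_lt_top).ne measure_closedBall_lt_top.ne]
    exact measureReal_mono (union_subset hsub (closedBall_subset_closedBall (by linarith)))
      measure_closedBall_lt_top.ne
  have hB : 0 < μ.real (ball 0 1) :=
    ENNReal.toReal_pos (measure_ball_pos μ _ one_pos).ne' measure_ball_lt_top.ne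
  simp only [Measure.addHaar_real_ball_of_pos μ _ ht₀, Finset.sum_const, nsmul_eq_mul,
    Measure.addHaar_real_closedBall μ _ (by linarith : (0 : ℝ) ≤ 1 - t),
    Measure.addHaar_real_closedBall μ _ (by linarith : (0 : ℝ) ≤ 1 + t)] at hmeas
  nlinarith

theorem exists_finset_sphere_net {t : ℝ} (ht₀ : 0 < t) (ht₁ : t ≤ 1) :
    ∃ U : Finset E, ↑U ⊆ sphere (0 : E) 1 ∧ (∀ u ∈ sphere (0 : E) 1, ∃ v ∈ U, dist u v ≤ 2 * t) ∧
      U.card * t ^ finrank ℝ E ≤ (1 + t) ^ finrank ℝ E - (1 - t) ^ finrank ℝ E := by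
  set ε : ℝ≥0 := (2 * t).toNNReal
  have hfin := (isCompact_sphere (0 : E) 1).packingNumber_ne_top (ε := ε) (by simp [ε, ht₀])
  set C := maximalSeparatedSet ε (sphere (0 : E) 1)
  have hC : C.Finite := encard_ne_top_iff.mp (by rwa [encard_maximalSeparatedSet hfin])
  refine ⟨hC.toFinset, by simpa using maximalSeparatedSet_subset, fun u hu ↦ ?_,
    card_mul_pow_le_of_pairwise_le_dist (by simpa using maximalSeparatedSet_subset) ht₀ ht₁ ?_⟩
  · obtain ⟨v, hv, huv⟩ := mem_iUnion₂.mp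
      (isCover_iff_subset_iUnion_closedBall.mp (isCover_maximalSeparatedSet hfin) hu)
    exact ⟨v, hC.mem_toFinset.mpr hv, by simpa [ε, ht₀.le] using mem_closedBall.mp huv⟩
  · intro u hu v hv huv
    have h : ENNReal.ofReal (2 * t) < edist u v :=
      isSeparated_maximalSeparatedSet (by simpa using hu) (by simpa using hv) huv
    rw [edist_dist, ENNReal.ofReal_lt_ofReal_iff_of_nonneg (by positivity)] at h
    exact h.le

theorem exists_finset_sphere_net_card_le {R : ℝ} (hR : 1 < R) :
    ∃ U : Finset E, ↑U ⊆ sphere (0 : E) 1 ∧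
      (∀ u ∈ sphere (0 : E) 1, ∃ v ∈ U, R * dist u v ^ 2 ≤ 2) ∧
      (U.card : ℝ) ≤ (finrank ℝ E + 1) * 4 ^ finrank ℝ E * R ^ (((finrank ℝ E : ℝ) - 1) / 2) := by
  set t := (2 * R) ^ (-(1 / 2) : ℝ)
  have ht₀ : 0 < t := by positivity
  have ht : 2 * R * t ^ 2 = 1 := by
    rw [← rpow_natCast, ← rpow_mul (by positivity)]
    norm_num [rpow_neg_one]
    field_simp
  have ht₁ : t ≤ 1 := by nlinarith
  obtain ⟨U, hU, hnet, hcard⟩ := exists_finset_sphere_net (E := E) ht₀ ht₁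
  refine ⟨U, hU, fun u hu ↦ ?_, le_mul_rpow_of_mul_pow_le (by linarith) _
    (hcard.trans (one_add_pow_sub_one_sub_pow_le ht₀.le ht₁ _))⟩
  obtain ⟨v, hv, huv⟩ := hnet u hu
  have : dist u v ^ 2 ≤ (2 * t) ^ 2 := pow_le_pow_left₀ dist_nonneg huv 2
  exact ⟨v, hv, by nlinarith⟩

end FiniteDimensional

section InnerProductSpace

variable {F : Type*} [NormedAddCommGroup F] [InnerProductSpace ℝ F]

theorem one_sub_dist_sq_div_two_eq_inner {u v : F} (hu : ‖u‖ = 1) (hv : ‖v‖ = 1) :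
    1 - dist u v ^ 2 / 2 = ⟪u, v⟫ := by
  rw [dist_eq_norm, norm_sub_sq_real, hu, hv]
  ring

theorem sub_one_le_inner_of_dist_sq_le {x v : F} {R : ℝ} (hR : 1 ≤ R) (hx : R ≤ ‖x‖)
    (hv : ‖v‖ = 1) (hxv : R * dist (‖x‖⁻¹ • x) v ^ 2 ≤ 2) : R - 1 ≤ ⟪x, v⟫ := by
  have hx₀ : 0 < ‖x‖ := by linarith
  have hu : ‖‖x‖⁻¹ • x‖ = 1 := by simpa using norm_smul_inv_norm (𝕜 := ℝ) (norm_pos_iff.mp hx₀)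
  have hcos : 1 - 1 / R ≤ ⟪‖x‖⁻¹ • x, v⟫ := by
    rw [← one_sub_dist_sq_div_two_eq_inner hu hv]
    have : dist (‖x‖⁻¹ • x) v ^ 2 / 2 ≤ 1 / R := by
      rw [div_le_div_iff₀ two_pos (by linarith)]
      linarith
    linarith
  have hcos₀ : 0 ≤ 1 - 1 / R := by
    rw [sub_nonneg, div_le_one (by linarith)]
    exact hR
  calc R - 1 = R * (1 - 1 / R) := by field_simp
    _ ≤ ‖x‖ * ⟪‖x‖⁻¹ • x, v⟫ := mul_le_mul hx hcos hcos₀ hx₀.le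
    _ = ⟪x, v⟫ := by rw [real_inner_smul_left, mul_inv_cancel_left₀ hx₀.ne']

end InnerProductSpace

theorem sphere_cap_covering_general (d : ℕ) :
    ∃ C : ℝ, 0 < C ∧ ∀ R : ℝ, 1 < R →
      ∃ U : Finset (EuclideanSpace ℝ (Fin d)),
        (∀ v ∈ U, ‖v‖ = 1) ∧
        (U.card : ℝ) ≤ C * R ^ (((d : ℝ) - 1) / 2) ∧
        {x : EuclideanSpace ℝ (Fin d) | R ≤ ‖x‖} ⊆
          ⋃ v ∈ U, {x : EuclideanSpace ℝ (Fin d) | R - 1 ≤ inner ℝ x v} := by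
  refine ⟨(d + 1) * 4 ^ d, by positivity, fun R hR ↦ ?_⟩
  obtain ⟨U, hU, hnet, hcard⟩ := exists_finset_sphere_net_card_le (E := EuclideanSpace ℝ (Fin d)) hR
  rw [finrank_euclideanSpace_fin] at hcard
  refine ⟨U, fun v hv ↦ by simpa using hU hv, hcard, fun x (hx : R ≤ ‖x‖) ↦ ?_⟩
  have hx₀ : x ≠ 0 := norm_pos_iff.mp (by linarith)
  obtain ⟨v, hv, hxv⟩ := hnet _ (by simpa using norm_smul_inv_norm (𝕜 := ℝ) hx₀)
  exact mem_iUnion₂.mpr ⟨v, hv, sub_one_le_inner_of_dist_sq_le hR.le hx (by simpa using hU hv) hxv⟩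

theorem sphere_cap_covering (d : ℕ) (hd : 1 ≤ d) :
    ∃ C : ℝ, 0 < C ∧ ∀ R : ℝ, 1 < R →
      ∃ U : Finset (EuclideanSpace ℝ (Fin d)),
        (∀ v ∈ U, ‖v‖ = 1) ∧
        (U.card : ℝ) ≤ C * R ^ (((d : ℝ) - 1) / 2) ∧
        {x : EuclideanSpace ℝ (Fin d) | R ≤ ‖x‖} ⊆
          ⋃ v ∈ U, {x : EuclideanSpace ℝ (Fin d) | R - 1 ≤ inner ℝ x v} :=
  sphere_cap_covering_general d
end

section
/- Fix an integer d ≥ 1 and for reals t ≥ 1, y ≥ 1 and s ∈ [0, t] define g_{t,y}(s) = ((d − 1)/(2√2))·log((s + y)/y) − (3/(2√2))·log((t + 1)/(t − s + 1)). Then for every α ∈ (0, 1/2) there exists a constant A > 0, depending only on d and α, such that for all t ≥ 1, all y ≥ 1 and all s ∈ (0, t): |g_{t,y}(s)| ≤ A·s^α and |g_{t,y}(t) − g_{t,y}(s)| ≤ A·(t − s)^α. -/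
private lemma log_one_add_le_rpow (α : ℝ) (hα0 : 0 < α) (hα1 : α ≤ 1) {x : ℝ} (hx : 0 ≤ x) :
    Real.log (1 + x) ≤ (1 + 1/α) * x ^ α := by
  have hC : (1:ℝ) ≤ 1 + 1/α := by
    have : 0 < 1/α := by positivity
    linarith
  rcases eq_or_lt_of_le hx with h0 | h0
  · simp [← h0, Real.zero_rpow (ne_of_gt hα0)]
  rcases le_or_gt x 1 with h1 | h1
  · have hlog : Real.log (1 + x) ≤ x := by
      have := Real.log_le_sub_one_of_pos (by linarith : (0:ℝ) < 1 + x)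
      linarith
    have hxα : x ≤ x ^ α := by
      calc x = x ^ (1:ℝ) := (Real.rpow_one x).symm
        _ ≤ x ^ α := Real.rpow_le_rpow_of_exponent_ge h0 h1 hα1
    have hnn : 0 ≤ x ^ α := Real.rpow_nonneg hx α
    nlinarith
  · have hxα : (1:ℝ) ≤ x ^ α := by
      calc (1:ℝ) = 1 ^ α := (Real.one_rpow α).symm
        _ ≤ x ^ α := Real.rpow_le_rpow (by norm_num) h1.le hα0.le
    have h2 : Real.log (1 + x) ≤ Real.log (2 * x) := by
      apply Real.log_le_log (by linarith)
      linarith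
    have h3 : Real.log (2 * x) = Real.log 2 + Real.log x :=
      Real.log_mul two_ne_zero (by linarith)
    have hlog2 : Real.log 2 ≤ 1 := by
      have := Real.log_le_sub_one_of_pos (by norm_num : (0:ℝ) < 2)
      linarith
    have hlogx : Real.log x ≤ x ^ α / α := by
      rw [le_div_iff₀ hα0]
      have h := Real.log_le_sub_one_of_pos (show (0:ℝ) < x ^ α from by positivity)
      rw [Real.log_rpow h0] at h
      nlinarith
    have heq : (1 + 1/α) * x ^ α = x ^ α + x ^ α / α := by
      field_simp
    linarith

private lemma key_bound (α : ℝ) (hα0 : 0 < α) (hα1 : α ≤ 1) {u v : ℝ} (hu : 0 ≤ u)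
    (huv : u ≤ v) : Real.log (1 + u) ≤ (1 + 1/α) * v ^ α := by
  have h1 := log_one_add_le_rpow α hα0 hα1 hu
  have h2 : u ^ α ≤ v ^ α := Real.rpow_le_rpow hu huv hα0.le
  have hC : (0:ℝ) ≤ 1 + 1/α := by positivity
  nlinarith

theorem barrier_holder_bound (d : ℕ) (hd : 1 ≤ d) (α : ℝ) (hα0 : 0 < α) (hα : α < 1 / 2) :
    ∃ A : ℝ, 0 < A ∧ ∀ t : ℝ, 1 ≤ t → ∀ y : ℝ, 1 ≤ y → ∀ s : ℝ, s ∈ Set.Ioo 0 t →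
      (|(((d : ℝ) - 1) / (2 * Real.sqrt 2)) * Real.log ((s + y) / y) -
          (3 / (2 * Real.sqrt 2)) * Real.log ((t + 1) / (t - s + 1))| ≤ A * s ^ α) ∧
      (|((((d : ℝ) - 1) / (2 * Real.sqrt 2)) * Real.log ((t + y) / y) -
            (3 / (2 * Real.sqrt 2)) * Real.log (t + 1)) -
          ((((d : ℝ) - 1) / (2 * Real.sqrt 2)) * Real.log ((s + y) / y) -
            (3 / (2 * Real.sqrt 2)) * Real.log ((t + 1) / (t - s + 1)))| ≤ A * (t - s) ^ α) := by
  have hα1 : α ≤ 1 := by linarith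
  have hs2 : (0:ℝ) < Real.sqrt 2 := Real.sqrt_pos.mpr (by norm_num)
  set a : ℝ := ((d : ℝ) - 1) / (2 * Real.sqrt 2) with ha_def
  set b : ℝ := 3 / (2 * Real.sqrt 2) with hb_def
  have hd1 : (1:ℝ) ≤ (d:ℝ) := by exact_mod_cast hd
  have ha : 0 ≤ a := by
    apply div_nonneg (by linarith) (by positivity)
  have hb : 0 < b := by positivity
  set C : ℝ := 1 + 1/α with hC_def
  have hC : 0 < C := by positivity
  clear_value a b C
  refine ⟨(a + b) * C, by positivity, ?_⟩
  intro t ht y hy s hs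
  obtain ⟨hs0, hst⟩ := hs
  have hy0 : (0:ℝ) < y := by linarith
  have hts1 : (0:ℝ) < t - s + 1 := by linarith
  -- first bound
  have hL1eq : (s + y) / y = 1 + s / y := by field_simp; ring
  have hL2eq : (t + 1) / (t - s + 1) = 1 + s / (t - s + 1) := by field_simp; ring
  have hL1nn : 0 ≤ Real.log ((s + y) / y) := by
    rw [hL1eq]; apply Real.log_nonneg
    have : 0 ≤ s / y := by positivity
    linarith
  have hL2nn : 0 ≤ Real.log ((t + 1) / (t - s + 1)) := by
    rw [hL2eq]; apply Real.log_nonneg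
    have : 0 ≤ s / (t - s + 1) := by positivity
    linarith
  have hL1 : Real.log ((s + y) / y) ≤ C * s ^ α := by
    rw [hL1eq, hC_def]
    exact key_bound α hα0 hα1 (by positivity) (div_le_self hs0.le hy)
  have hL2 : Real.log ((t + 1) / (t - s + 1)) ≤ C * s ^ α := by
    rw [hL2eq, hC_def]
    exact key_bound α hα0 hα1 (by positivity) (div_le_self hs0.le (by linarith))
  have hsα : 0 ≤ s ^ α := Real.rpow_nonneg hs0.le α
  constructor
  · rw [abs_sub_le_iff]
    constructor
    · have h1 : a * Real.log ((s + y) / y) ≤ a * (C * s ^ α) :=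
        mul_le_mul_of_nonneg_left hL1 ha
      have h2 : 0 ≤ b * Real.log ((t + 1) / (t - s + 1)) := mul_nonneg hb.le hL2nn
      nlinarith
    · have h1 : b * Real.log ((t + 1) / (t - s + 1)) ≤ b * (C * s ^ α) :=
        mul_le_mul_of_nonneg_left hL2 hb.le
      have h2 : 0 ≤ a * Real.log ((s + y) / y) := mul_nonneg ha hL1nn
      nlinarith
  -- second bound
  · have hE1eq : (t + y) / y = ((s + y) / y) * (1 + (t - s) / (s + y)) := by
      field_simp; ring
    have hE2eq : (t + 1 : ℝ) = ((t + 1) / (t - s + 1)) * (1 + (t - s)) := by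
      rw [show (1 + (t - s)) = (t - s + 1) by ring, div_mul_cancel₀ _ (ne_of_gt hts1)]
    have hsy : (0:ℝ) < s + y := by linarith
    have hfrac : (0:ℝ) ≤ (t - s) / (s + y) := div_nonneg (by linarith) hsy.le
    have h1 : Real.log ((t + y) / y) =
        Real.log ((s + y) / y) + Real.log (1 + (t - s) / (s + y)) := by
      rw [hE1eq, Real.log_mul (ne_of_gt (div_pos hsy hy0)) (by linarith)]
    have h2 : Real.log (t + 1) =
        Real.log ((t + 1) / (t - s + 1)) + Real.log (1 + (t - s)) := by
      rw [show Real.log (t + 1) = Real.log (((t + 1) / (t - s + 1)) * (1 + (t - s))) from by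
        rw [← hE2eq], Real.log_mul (ne_of_gt (div_pos (by linarith) hts1)) (by linarith)]
    rw [h1, h2]
    have harg : a * (Real.log ((s + y) / y) + Real.log (1 + (t - s) / (s + y))) -
        b * (Real.log ((t + 1) / (t - s + 1)) + Real.log (1 + (t - s))) -
        (a * Real.log ((s + y) / y) - b * Real.log ((t + 1) / (t - s + 1))) =
        a * Real.log (1 + (t - s) / (s + y)) - b * Real.log (1 + (t - s)) := by ring
    rw [harg]
    have hE1nn : 0 ≤ Real.log (1 + (t - s) / (s + y)) := by
      apply Real.log_nonneg; linarith
    have hE2nn : 0 ≤ Real.log (1 + (t - s)) := by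
      apply Real.log_nonneg; linarith
    have hE1 : Real.log (1 + (t - s) / (s + y)) ≤ C * (t - s) ^ α := by
      rw [hC_def]
      apply key_bound α hα0 hα1 hfrac
      apply div_le_self (by linarith) (by linarith)
    have hE2 : Real.log (1 + (t - s)) ≤ C * (t - s) ^ α := by
      rw [hC_def]
      exact key_bound α hα0 hα1 (by linarith) le_rfl
    have htsα : 0 ≤ (t - s) ^ α := Real.rpow_nonneg (by linarith) α
    rw [abs_sub_le_iff]
    constructor
    · have h3 : a * Real.log (1 + (t - s) / (s + y)) ≤ a * (C * (t - s) ^ α) :=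
        mul_le_mul_of_nonneg_left hE1 ha
      have h4 : 0 ≤ b * Real.log (1 + (t - s)) := mul_nonneg hb.le hE2nn
      have h5 : 0 ≤ b * (C * (t - s) ^ α) := mul_nonneg hb.le (mul_nonneg hC.le htsα)
      have h6 : (a + b) * C * (t - s) ^ α = a * (C * (t - s) ^ α) + b * (C * (t - s) ^ α) := by
        ring
      linarith
    · have h3 : b * Real.log (1 + (t - s)) ≤ b * (C * (t - s) ^ α) :=
        mul_le_mul_of_nonneg_left hE2 hb.le
      have h4 : 0 ≤ a * Real.log (1 + (t - s) / (s + y)) := mul_nonneg ha hE1nn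
      have h5 : 0 ≤ a * (C * (t - s) ^ α) := mul_nonneg ha (mul_nonneg hC.le htsα)
      have h6 : (a + b) * C * (t - s) ^ α = a * (C * (t - s) ^ α) + b * (C * (t - s) ^ α) := by
        ring
      linarith
end
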